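/- Let φ₀ ∈ Hom_K(F, K̄) and let E be a finite extension of K inside K̄ containing φ₀(F) (which equals the reflex field E_{{φ₀}}); let R be a commutative O_E-algebra. Then: (1) the multiplication map O_F ⊗_{O_K} R → R, a⊗r ↦ φ₀(a)·r (where φ₀(a) is viewed in O_E and then in R), is surjective with kernel equal to J_{{φ₀},R}, so it induces an isomorphism (O_F ⊗_{O_K} R)/J_{{φ₀},R} ≅ R; (2) if M is a locally free O_F ⊗_{O_K} R-module and 𝓕 ⊆ M is an O_F ⊗_{O_K} R-submodule which is an R-module direct summand, then J_{{φ₀},R}·M ⊆ 𝓕 holds if and only if O_F acts on M/𝓕 through φ₀, i.e. (a⊗1)·m = (1⊗φ₀(a))·m in M/𝓕 for all a ∈ O_F and all m ∈ M/𝓕. -/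

import Mathlib

/-!
For a single embedding `e_{ζ,{φ₀}}(T) = T - φ₀(ζ)`, so the Eisenstein element is
`ζ ⊗ 1 - 1 ⊗ φ₀(ζ)`. The two `O_K`-algebra maps `a ↦ a ⊗ 1` and `a ↦ 1 ⊗ φ₀(a)` from `O_F` to a
quotient of `O_F ⊗ R` agree as soon as they agree on the generator `ζ`; hence every ideal
containing this element contains all `a ⊗ 1 - 1 ⊗ φ₀(a)`. Modulo these `O_F ⊗ R` collapses onto
`R`, which gives the kernel in (1), and the same remark applied to the annihilator of `M/𝓕`
gives (2).
-/

open scoped TensorProduct Polynomial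

set_option synthInstance.maxHeartbeats 400000
set_option maxHeartbeats 1000000

noncomputable section

variable (p : ℕ) [Fact p.Prime]

/-- The ring of integers of a `p`-adic field `L`: the integral closure of `ℤₚ` in `L`. -/
def RInt (L : Type) [Field L] [Algebra ℤ_[p] L] : Type := ↥(integralClosure ℤ_[p] L)

local instance instCR (L : Type) [Field L] [Algebra ℤ_[p] L] : CommRing (RInt p L) :=
  inferInstanceAs (CommRing ↥(integralClosure ℤ_[p] L))

local instance instAlgL (L : Type) [Field L] [Algebra ℤ_[p] L] : Algebra (RInt p L) L :=
  inferInstanceAs (Algebra ↥(integralClosure ℤ_[p] L) L)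

/-- Functoriality of rings of integers. -/
def RIntMap (L L' : Type) [Field L] [Field L'] [Algebra ℤ_[p] L] [Algebra ℤ_[p] L']
    (f : L →ₐ[ℤ_[p]] L') : RInt p L →+* RInt p L' :=
  show ↥(integralClosure ℤ_[p] L) →+* ↥(integralClosure ℤ_[p] L') from
  { toFun := fun x => ⟨f x, IsIntegral.map f x.2⟩
    map_one' := by ext; simp
    map_mul' := fun x y => by ext; simp
    map_zero' := by ext; simp
    map_add' := fun x y => by ext; simp }

section Galois

variable (K F : Type) [Field K] [Field F] [Algebra K F]

/-- The stabilizer of a finite set of embeddings `F →ₐ[K] K̄` inside `Gal(K̄/K)`: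
the set of `σ` with `σ ∘ S = S`. -/
def galStab (S : Finset (F →ₐ[K] AlgebraicClosure K)) :
    Subgroup (AlgebraicClosure K ≃ₐ[K] AlgebraicClosure K) := by
  letI := Classical.decEq (F →ₐ[K] AlgebraicClosure K)
  exact
  { carrier := {σ | S.image (fun φ =>
        ((σ : AlgebraicClosure K →ₐ[K] AlgebraicClosure K)).comp φ) = S}
    one_mem' := by
      have h : (fun φ : F →ₐ[K] AlgebraicClosure K =>
          (((1 : AlgebraicClosure K ≃ₐ[K] AlgebraicClosure K) :
            AlgebraicClosure K →ₐ[K] AlgebraicClosure K)).comp φ) = id := by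
        funext φ; exact AlgHom.ext fun x => rfl
      simp only [Set.mem_setOf_eq, h, Finset.image_id]
    mul_mem' := by
      intro σ τ hσ hτ
      simp only [Set.mem_setOf_eq] at hσ hτ ⊢
      have h : (fun φ : F →ₐ[K] AlgebraicClosure K =>
          (((σ * τ : AlgebraicClosure K ≃ₐ[K] AlgebraicClosure K) :
            AlgebraicClosure K →ₐ[K] AlgebraicClosure K)).comp φ)
          = (fun φ => ((σ : AlgebraicClosure K →ₐ[K] AlgebraicClosure K)).comp φ) ∘
            (fun φ => ((τ : AlgebraicClosure K →ₐ[K] AlgebraicClosure K)).comp φ) := by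
        funext φ; exact AlgHom.ext fun x => rfl
      rw [h, ← Finset.image_image, hτ, hσ]
    inv_mem' := by
      intro σ hσ
      simp only [Set.mem_setOf_eq] at hσ ⊢
      conv_lhs => rw [← hσ]
      rw [Finset.image_image]
      have h : ((fun φ : F →ₐ[K] AlgebraicClosure K =>
          (((σ⁻¹ : AlgebraicClosure K ≃ₐ[K] AlgebraicClosure K) :
            AlgebraicClosure K →ₐ[K] AlgebraicClosure K)).comp φ) ∘
          (fun φ => ((σ : AlgebraicClosure K →ₐ[K] AlgebraicClosure K)).comp φ)) = id := by
        funext φ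
        exact AlgHom.ext fun x => σ.symm_apply_apply (φ x)
      rw [h, Finset.image_id] }

/-- The reflex field `E_S ⊆ K̄` of a set `S` of embeddings `F →ₐ[K] K̄`: the fixed field
of its stabilizer in `Gal(K̄/K)`. -/
def reflexField (S : Finset (F →ₐ[K] AlgebraicClosure K)) :
    IntermediateField K (AlgebraicClosure K) :=
  IntermediateField.fixedField (galStab K F S)

end Galois

section Eis

/- `K` is a finite extension of `ℚₚ` (with its induced `ℤₚ`-algebra structure), `F` is a
finite extension of `K`, and `E` is a further finite extension of `K` equipped with a
`K`-embedding `ιE : E → K̄` realizing it as a subfield of an algebraic closure of `K`. -/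
variable (K : Type) [Field K] [Algebra ℚ_[p] K] [FiniteDimensional ℚ_[p] K]
  [Algebra ℤ_[p] K] [IsScalarTower ℤ_[p] ℚ_[p] K]
variable (F : Type) [Field F] [Algebra K F] [FiniteDimensional K F]
  [Algebra ℤ_[p] F] [IsScalarTower ℤ_[p] K F]
variable (E : Type) [Field E] [Algebra K E] [Algebra ℤ_[p] E] [IsScalarTower ℤ_[p] K E]

local instance algOKOF : Algebra (RInt p K) (RInt p F) :=
  (RIntMap p K F (IsScalarTower.toAlgHom ℤ_[p] K F)).toAlgebra

local instance algOKOE : Algebra (RInt p K) (RInt p E) :=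
  (RIntMap p K E (IsScalarTower.toAlgHom ℤ_[p] K E)).toAlgebra

variable (ιE : E →ₐ[K] AlgebraicClosure K)

/-- The canonical map `O_E → K̄` induced by `ιE : E → K̄`. -/
def OEtoKb : RInt p E →+* AlgebraicClosure K :=
  (ιE : E →+* AlgebraicClosure K).comp (algebraMap (RInt p E) E)

/-- `Q ∈ O_E[T]` represents the Eisenstein polynomial `e_{ζ,S}(T) = ∏_{φ ∈ S} (T - φ(ζ))`. -/
def IsEisPoly (S : Finset (F →ₐ[K] AlgebraicClosure K)) (ζ : RInt p F)
    (Q : Polynomial (RInt p E)) : Prop :=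
  Q.map (OEtoKb p K E ιE) =
    ∏ φ ∈ S, (Polynomial.X - Polynomial.C (φ (algebraMap (RInt p F) F ζ)))

variable (R : Type) [CommRing R] [Algebra (RInt p K) R] [Algebra (RInt p E) R]

/-- The element `e_S = e_{ζ,S}(ζ ⊗ 1)` of `O_F ⊗_{O_K} R`, where `Q ∈ O_E[T]`
represents the Eisenstein polynomial `e_{ζ,S}(T)`. -/
def eElt (Q : Polynomial (RInt p E)) (ζ : RInt p F) : (RInt p F) ⊗[RInt p K] R :=
  Polynomial.eval₂
    ((Algebra.TensorProduct.includeRight :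
        R →ₐ[RInt p K] (RInt p F) ⊗[RInt p K] R).toRingHom.comp (algebraMap (RInt p E) R))
    (ζ ⊗ₜ[RInt p K] (1 : R)) Q

/-- The Eisenstein ideal `J_{S,R} ⊆ O_F ⊗_{O_K} R`, generated by `e_S`. -/
def JIdeal (Q : Polynomial (RInt p E)) (ζ : RInt p F) :
    Ideal ((RInt p F) ⊗[RInt p K] R) :=
  Ideal.span {eElt p K F E R Q ζ}

local instance algOKKb : Algebra (RInt p K) (AlgebraicClosure K) :=
  ((algebraMap K (AlgebraicClosure K)).comp (algebraMap (RInt p K) K)).toAlgebra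

/-- The restriction of an embedding `φ : F →ₐ[K] K̄` to the ring of integers, as an
`O_K`-algebra homomorphism `O_F →ₐ[O_K] K̄`. -/
def embToKb (φ : F →ₐ[K] AlgebraicClosure K) : RInt p F →ₐ[RInt p K] AlgebraicClosure K where
  toRingHom := (φ : F →+* AlgebraicClosure K).comp (algebraMap (RInt p F) F)
  commutes' := fun r => by
    have h1 : (algebraMap (RInt p F) F) ((algebraMap (RInt p K) (RInt p F)) r)
        = algebraMap K F ((algebraMap (RInt p K) K) r) := by
      show algebraMap K F ((IsScalarTower.toAlgHom ℤ_[p] K K) ((algebraMap (RInt p K) K) r)) = _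
      rfl
    show φ ((algebraMap (RInt p F) F) ((algebraMap (RInt p K) (RInt p F)) r)) = _
    rw [h1, φ.commutes]
    rfl

/-- The inclusion `O_E → K̄` as an `O_K`-algebra homomorphism. -/
def oEToKb : RInt p E →ₐ[RInt p K] AlgebraicClosure K where
  toRingHom := OEtoKb p K E ιE
  commutes' := fun r => by
    have h1 : (algebraMap (RInt p E) E) ((algebraMap (RInt p K) (RInt p E)) r)
        = algebraMap K E ((algebraMap (RInt p K) K) r) := by
      show algebraMap K E ((IsScalarTower.toAlgHom ℤ_[p] K K) ((algebraMap (RInt p K) K) r)) = _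
      rfl
    show ιE ((algebraMap (RInt p E) E) ((algebraMap (RInt p K) (RInt p E)) r)) = _
    rw [h1, ιE.commutes]
    rfl

/-- The map `O_F ⊗_{O_K} O_E → K̄` whose value on `a ⊗ e` is `φ(a)·e`. -/
def phiComponent (φ : F →ₐ[K] AlgebraicClosure K) :
    (RInt p F) ⊗[RInt p K] (RInt p E) →ₐ[RInt p K] AlgebraicClosure K :=
  Algebra.TensorProduct.productMap (embToKb p K F φ) (oEToKb p K E ιE)

attribute [local instance] Algebra.TensorProduct.rightAlgebra

variable (φE : F →ₐ[K] E)

/-- When an embedding `φ₀ : F → K̄` factors through `E` via `φE : F → E`, the induced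
`O_K`-algebra homomorphism `O_F → O_E` on rings of integers. -/
def phiZeroO : RInt p F →ₐ[RInt p K] RInt p E where
  toRingHom := RIntMap p F E (φE.restrictScalars ℤ_[p])
  commutes' := fun r => by
    apply Subtype.ext
    show φE ((algebraMap K F) ((algebraMap (RInt p K) K) r)) = _
    rw [φE.commutes]
    rfl

section GraphIdeal

open Algebra.TensorProduct

variable {A B C : Type*} [CommRing A] [CommRing B] [CommRing C] [Algebra A B] [Algebra A C]
  (f : B →ₐ[A] C) {ζ : B}

theorem tmul_one_sub_one_tmul_mem_of_adjoin_eq_top (hζ : Algebra.adjoin A {ζ} = ⊤)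
    {I : Ideal (B ⊗[A] C)} (h : ζ ⊗ₜ 1 - 1 ⊗ₜ f ζ ∈ I) (b : B) :
    b ⊗ₜ 1 - 1 ⊗ₜ f b ∈ I := by
  have hext : (Ideal.Quotient.mkₐ A I).comp includeLeft =
      ((Ideal.Quotient.mkₐ A I).comp includeRight).comp f :=
    AlgHom.ext_of_adjoin_eq_top hζ fun x hx => by
      rw [Set.mem_singleton_iff.mp hx]
      exact Ideal.Quotient.eq.mpr h
  exact Ideal.Quotient.eq.mp (DFunLike.congr_fun hext b)

theorem ker_productMap_id_eq_span_singleton (hζ : Algebra.adjoin A {ζ} = ⊤) :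
    RingHom.ker (productMap f (AlgHom.id A C)) = Ideal.span {ζ ⊗ₜ 1 - 1 ⊗ₜ f ζ} := by
  set I := Ideal.span {ζ ⊗ₜ[A] (1 : C) - 1 ⊗ₜ f ζ}
  have hsection : ((Ideal.Quotient.mkₐ A I).comp includeRight).comp
      (productMap f (AlgHom.id A C)) = Ideal.Quotient.mkₐ A I := by
    refine Algebra.TensorProduct.ext' fun b c => ?_
    have hb : Ideal.Quotient.mk I (b ⊗ₜ 1) = Ideal.Quotient.mk I (1 ⊗ₜ f b) :=
      Ideal.Quotient.eq.mpr
        (tmul_one_sub_one_tmul_mem_of_adjoin_eq_top f hζ (Ideal.mem_span_singleton_self _) b)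
    calc Ideal.Quotient.mk I (1 ⊗ₜ (f b * c))
        = Ideal.Quotient.mk I (1 ⊗ₜ f b) * Ideal.Quotient.mk I (1 ⊗ₜ c) := by
          rw [← map_mul, tmul_mul_tmul, one_mul]
      _ = Ideal.Quotient.mk I (b ⊗ₜ c) := by
          rw [← hb, ← map_mul, tmul_mul_tmul, one_mul, mul_one]
  refine le_antisymm (fun x hx => ?_) ?_
  · rw [← Ideal.Quotient.eq_zero_iff_mem, ← Ideal.Quotient.mkₐ_eq_mk A, ← hsection]
    simp only [AlgHom.comp_apply, RingHom.mem_ker.mp hx, map_zero]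
  · rw [Ideal.span_le, Set.singleton_subset_iff]
    simp

theorem forall_tmul_one_smul_eq_iff (hζ : Algebra.adjoin A {ζ} = ⊤) (P : Type*)
    [AddCommGroup P] [Module (B ⊗[A] C) P] :
    (∀ (b : B) (m : P), (b ⊗ₜ[A] (1 : C)) • m = ((1 : B) ⊗ₜ[A] f b) • m) ↔
      Ideal.span {ζ ⊗ₜ 1 - 1 ⊗ₜ f ζ} ≤ Module.annihilator (B ⊗[A] C) P := by
  simp_rw [Ideal.span_singleton_le_iff_mem]
  refine ⟨fun h => ?_, fun h b m => ?_⟩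
  · exact Module.mem_annihilator.mpr fun m => by rw [sub_smul, h, sub_self]
  · have := Module.mem_annihilator.mp (tmul_one_sub_one_tmul_mem_of_adjoin_eq_top f hζ h b) m
    rwa [sub_smul, sub_eq_zero] at this

end GraphIdeal

theorem Submodule.smul_top_le_iff_le_annihilator_quotient {S M : Type*} [CommRing S]
    [AddCommGroup M] [Module S M] (I : Ideal S) (N : Submodule S M) :
    I • (⊤ : Submodule S M) ≤ N ↔ I ≤ Module.annihilator S (M ⧸ N) := by
  rw [Submodule.annihilator_quotient, Submodule.smul_le]
  simp [SetLike.le_def, Submodule.mem_colon]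

theorem statement3 [IsScalarTower (RInt p K) (RInt p E) R]
    (φ₀ : F →ₐ[K] AlgebraicClosure K) (hφE : ∀ x : F, ιE (φE x) = φ₀ x)
    (ζ : RInt p F) (hζ : Algebra.adjoin (RInt p K) {ζ} = ⊤)
    (Q₀ : Polynomial (RInt p E)) (hQ₀ : IsEisPoly p K F E ιE {φ₀} ζ Q₀)
    -- data for part (2):
    (M : Type) [AddCommGroup M] [Module ((RInt p F) ⊗[RInt p K] R) M]
    (𝓕 : Submodule ((RInt p F) ⊗[RInt p K] R) M) :
    -- (1) the multiplication map is surjective with kernel `J_{{φ₀},R}`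
    (Function.Surjective
      (Algebra.TensorProduct.productMap
        ((IsScalarTower.toAlgHom (RInt p K) (RInt p E) R).comp (phiZeroO p K F E φE))
        (AlgHom.id (RInt p K) R)) ∧
      ∀ x : (RInt p F) ⊗[RInt p K] R,
        (Algebra.TensorProduct.productMap
          ((IsScalarTower.toAlgHom (RInt p K) (RInt p E) R).comp (phiZeroO p K F E φE))
          (AlgHom.id (RInt p K) R)) x = 0 ↔ x ∈ JIdeal p K F E R Q₀ ζ) ∧
    -- (2) strictness is equivalent to the `O_F`-action on `M/𝓕` being through `φ₀`
    ((JIdeal p K F E R Q₀ ζ • (⊤ : Submodule ((RInt p F) ⊗[RInt p K] R) M) ≤ 𝓕) ↔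
      ∀ (a : RInt p F) (m : M ⧸ 𝓕),
        ((a ⊗ₜ[RInt p K] (1 : R) : (RInt p F) ⊗[RInt p K] R)) • m =
        (((1 : RInt p F) ⊗ₜ[RInt p K]
            (algebraMap (RInt p E) R ((phiZeroO p K F E φE) a)) :
          (RInt p F) ⊗[RInt p K] R)) • m) := by
  set f := (IsScalarTower.toAlgHom (RInt p K) (RInt p E) R).comp (phiZeroO p K F E φE)
  have hQ : Q₀ = Polynomial.X - Polynomial.C (phiZeroO p K F E φE ζ) := by
    have hinj : Function.Injective (OEtoKb p K E ιE) :=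
      fun _ _ h => Subtype.ext ((ιE : E →+* AlgebraicClosure K).injective h)
    apply Polynomial.map_injective _ hinj
    rw [IsEisPoly, Finset.prod_singleton] at hQ₀
    rw [hQ₀, Polynomial.map_sub, Polynomial.map_X, Polynomial.map_C]
    exact congrArg (fun c => Polynomial.X - Polynomial.C c) (hφE _).symm
  have hJ : JIdeal p K F E R Q₀ ζ = Ideal.span {ζ ⊗ₜ 1 - 1 ⊗ₜ f ζ} := by
    rw [JIdeal, eElt, hQ]
    simp [f]
  refine ⟨⟨fun r => ⟨1 ⊗ₜ r, by simp⟩, fun x => ?_⟩, ?_⟩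
  · rw [hJ, ← ker_productMap_id_eq_span_singleton f hζ, RingHom.mem_ker]
  · rw [hJ, Submodule.smul_top_le_iff_le_annihilator_quotient,
      ← forall_tmul_one_smul_eq_iff f hζ]
    rfl

end Eis

end
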